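/- arXiv:1709.03072 — 3 statements merged into one kernel-verified Lean document; each statement's English description precedes it below -/
import Mathlib

section
/- Rough Gronwall Lemma: Fix a time horizon T > 0 and let G : [0,T] → [0,∞) be a path such that for some constants C, L > 0, κ ≥ 1, a regular control ω₁ and a control ω₂ on [0,T], one has δG_{st} := G_t − G_s ≤ C (sup_{0≤r≤t} G_r) ω₁(s,t)^{1/κ} + ω₂(s,t) for every pair s < t in [0,T] satisfying ω₁(s,t) ≤ L. Then, with α := min(1, 1/(L(2Ce²)^κ)), it holds that sup_{0≤t≤T} G_t ≤ 2 exp(ω₁(0,T)/(αL)) · ( G_0 + sup_{0≤t≤T} ( ω₂(0,t) · exp(−ω₁(0,t)/(αL)) ) ). -/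
/-- A control on the interval `[a,b]`: a nonnegative superadditive function of pairs
`s ≤ t` in `[a,b]`. -/
def IsControl (a b : ℝ) (ω : ℝ → ℝ → ℝ) : Prop :=
  (∀ s t, a ≤ s → s ≤ t → t ≤ b → 0 ≤ ω s t) ∧
  (∀ s u t, a ≤ s → s ≤ u → u ≤ t → t ≤ b → ω s u + ω u t ≤ ω s t)

/-- A regular control on `[a,b]`: a control with `ω(s,t) → 0` as `t - s → 0`. -/
def IsRegularControl (a b : ℝ) (ω : ℝ → ℝ → ℝ) : Prop :=
  IsControl a b ω ∧
  ∀ ε > (0 : ℝ), ∃ δ > (0 : ℝ), ∀ s t, a ≤ s → s ≤ t → t ≤ b → t - s < δ → ω s t < ε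

/-!
Cut `[0,T]` greedily: starting from `τ₀ = 0`, let `τ_{k+1}` be the supremum of the times `u` with
`ω₁(τ_k, u) ≤ a := αL`. Regularity of `ω₁` makes every step advance by a fixed amount until `T` is
reached, and maximality gives `ω₁(τ_k, τ_{k+2}) > a`, so `exp(ω₁(0,τ_k)/a)` gains a factor `e`
every two steps. On `[τ_k, τ_{k+1}]` the hypothesis bounds the running supremum `S_{k+1}` of `G`
by `S_k + C a^{1/κ} S_{k+1} + ω₂(τ_k, τ_{k+1})`, and `C a^{1/κ} ≤ 1/(2e²)` by the choice of `α`,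
so `S_{k+1} ≤ q (S_k + ω₂(τ_k, τ_{k+1}))` with `q = (1 - 1/(2e²))⁻¹`. Since `q² < e`, iterating
this recursion costs at most the factor `2 exp(ω₁(0,T)/a)`.
-/

open Set Filter Topology

namespace IsControl

variable {a b : ℝ} {ω : ℝ → ℝ → ℝ}

lemma apply_self (hω : IsControl a b ω) {s : ℝ} (has : a ≤ s) (hsb : s ≤ b) : ω s s = 0 :=
  le_antisymm (by linarith [hω.2 s s s has le_rfl le_rfl hsb]) (hω.1 s s has le_rfl hsb)

lemma mono_right (hω : IsControl a b ω) {s u v : ℝ} (has : a ≤ s) (hsu : s ≤ u) (huv : u ≤ v)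
    (hvb : v ≤ b) : ω s u ≤ ω s v := by
  linarith [hω.2 s u v has hsu huv hvb, hω.1 u v (has.trans hsu) huv hvb]

end IsControl

lemma IsRegularControl.tendsto_nhdsLT {a b t : ℝ} {ω : ℝ → ℝ → ℝ}
    (hω : IsRegularControl a b ω) (hat : a < t) (htb : t ≤ b) :
    Tendsto (fun r ↦ ω r t) (𝓝[<] t) (𝓝 0) := by
  refine Metric.tendsto_nhds.2 fun ε hε ↦ ?_
  obtain ⟨δ, hδ, hsmall⟩ := hω.2 ε hε
  filter_upwards [Ioo_mem_nhdsLT (max_lt hat (sub_lt_self t hδ))] with r ⟨hr, hrt⟩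
  rw [max_lt_iff] at hr
  rw [Real.dist_0_eq_abs, abs_of_nonneg (hω.1.1 r t hr.1.le hrt.le htb)]
  exact hsmall r t hr.1.le hrt.le htb (by linarith)

noncomputable def greedyTimes (a b c : ℝ) (ω : ℝ → ℝ → ℝ) : ℕ → ℝ
  | 0 => a
  | k + 1 => sSup {u ∈ Icc (greedyTimes a b c ω k) b | ω (greedyTimes a b c ω k) u ≤ c}

section greedyTimes

variable {a b c : ℝ} {ω : ℝ → ℝ → ℝ}

lemma self_mem_sep_control_le (hω : IsControl a b ω) (hc : 0 ≤ c) {s : ℝ} (hs : s ∈ Icc a b) :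
    s ∈ {u ∈ Icc s b | ω s u ≤ c} :=
  ⟨⟨le_rfl, hs.2⟩, (hω.apply_self hs.1 hs.2).trans_le hc⟩

lemma sSup_sep_control_le_mem_Icc (hω : IsControl a b ω) (hc : 0 ≤ c) {s : ℝ} (hs : s ∈ Icc a b) :
    sSup {u ∈ Icc s b | ω s u ≤ c} ∈ Icc s b := by
  have hself := self_mem_sep_control_le hω hc hs
  exact ⟨le_csSup ⟨b, fun u hu ↦ hu.1.2⟩ hself, csSup_le ⟨s, hself⟩ fun u hu ↦ hu.1.2⟩

lemma greedyTimes_mem_Icc (hω : IsControl a b ω) (hab : a ≤ b) (hc : 0 ≤ c) :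
    ∀ k, greedyTimes a b c ω k ∈ Icc a b
  | 0 => ⟨le_rfl, hab⟩
  | k + 1 => by
    have hk := greedyTimes_mem_Icc hω hab hc k
    have hsucc := sSup_sep_control_le_mem_Icc hω hc hk
    exact ⟨hk.1.trans hsucc.1, hsucc.2⟩

lemma greedyTimes_le_succ (hω : IsControl a b ω) (hab : a ≤ b) (hc : 0 ≤ c) (k : ℕ) :
    greedyTimes a b c ω k ≤ greedyTimes a b c ω (k + 1) :=
  (sSup_sep_control_le_mem_Icc hω hc (greedyTimes_mem_Icc hω hab hc k)).1

lemma greedyTimes_mono (hω : IsControl a b ω) (hab : a ≤ b) (hc : 0 ≤ c) :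
    Monotone (greedyTimes a b c ω) :=
  monotone_nat_of_le_succ (greedyTimes_le_succ hω hab hc)

lemma control_greedyTimes_le (hω : IsControl a b ω) (hab : a ≤ b) (hc : 0 ≤ c) {k : ℕ} {u : ℝ}
    (hku : greedyTimes a b c ω k ≤ u) (hu : u < greedyTimes a b c ω (k + 1)) :
    ω (greedyTimes a b c ω k) u ≤ c := by
  have hk := greedyTimes_mem_Icc hω hab hc k
  rw [greedyTimes] at hu
  obtain ⟨v, ⟨hv, hvc⟩, huv⟩ := exists_lt_of_lt_csSup ⟨_, self_mem_sep_control_le hω hc hk⟩ hu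
  exact (hω.mono_right hk.1 hku huv.le hv.2).trans hvc

lemma lt_control_greedyTimes (hω : IsControl a b ω) (hab : a ≤ b) (hc : 0 ≤ c) {k : ℕ} {u : ℝ}
    (hu : greedyTimes a b c ω (k + 1) < u) (hub : u ≤ b) : c < ω (greedyTimes a b c ω k) u := by
  by_contra! hle
  have hku : greedyTimes a b c ω k ≤ u := (greedyTimes_le_succ hω hab hc k).trans hu.le
  exact hu.not_ge (le_csSup ⟨b, fun v hv ↦ hv.1.2⟩ ⟨⟨hku, hub⟩, hle⟩)

lemma exists_pos_min_add_le_greedyTimes_succ (hω : IsRegularControl a b ω) (hab : a ≤ b)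
    (hc : 0 < c) :
    ∃ δ > 0, ∀ k, min b (greedyTimes a b c ω k + δ) ≤ greedyTimes a b c ω (k + 1) := by
  obtain ⟨δ, hδ, hsmall⟩ := hω.2 c hc
  refine ⟨δ / 2, half_pos hδ, fun k ↦ ?_⟩
  have hk := greedyTimes_mem_Icc hω.1 hab hc.le k
  refine le_csSup ⟨b, fun v hv ↦ hv.1.2⟩ ⟨⟨le_min hk.2 (by linarith), min_le_left _ _⟩, ?_⟩
  refine (hsmall _ _ hk.1 (le_min hk.2 (by linarith)) (min_le_left _ _) ?_).le
  linarith [min_le_right b (greedyTimes a b c ω k + δ / 2)]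

lemma greedyTimes_lt_succ (hω : IsRegularControl a b ω) (hab : a ≤ b) (hc : 0 < c) {k : ℕ}
    (hk : greedyTimes a b c ω k < b) : greedyTimes a b c ω k < greedyTimes a b c ω (k + 1) := by
  obtain ⟨δ, hδ, hstep⟩ := exists_pos_min_add_le_greedyTimes_succ hω hab hc
  exact (lt_min hk (lt_add_of_pos_right _ hδ)).trans_le (hstep k)

lemma exists_greedyTimes_eq (hω : IsRegularControl a b ω) (hab : a ≤ b) (hc : 0 < c) :
    ∃ N, greedyTimes a b c ω N = b ∧ ∀ k < N, greedyTimes a b c ω k < b := by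
  obtain ⟨δ, hδ, hstep⟩ := exists_pos_min_add_le_greedyTimes_succ hω hab hc
  have hmem := greedyTimes_mem_Icc hω.1 hab hc.le
  have hgrowth : ∀ k : ℕ, min b (a + k * δ) ≤ greedyTimes a b c ω k := by
    intro k
    induction k with
    | zero => simp [greedyTimes]
    | succ k ih =>
      have hk := hstep k
      have hk1 := hmem (k + 1)
      push_cast
      grind
  have hex : ∃ N, greedyTimes a b c ω N = b := by
    obtain ⟨N, hN⟩ := exists_nat_gt ((b - a) / δ)
    refine ⟨N, le_antisymm (hmem N).2 ((le_min le_rfl ?_).trans (hgrowth N))⟩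
    rw [div_lt_iff₀ hδ] at hN
    linarith
  classical
  exact ⟨Nat.find hex, Nat.find_spec hex, fun k hk ↦ (hmem k).2.lt_of_ne (Nat.find_min hex hk)⟩

lemma control_greedyTimes_add_two (hω : IsRegularControl a b ω) (hab : a ≤ b) (hc : 0 < c)
    {k : ℕ} (hk : greedyTimes a b c ω (k + 1) < b) :
    ω a (greedyTimes a b c ω k) + c < ω a (greedyTimes a b c ω (k + 2)) := by
  have hmem := greedyTimes_mem_Icc hω.1 hab hc.le
  have hmono := greedyTimes_mono hω.1 hab hc.le
  have hfar :=
    lt_control_greedyTimes hω.1 hab hc.le (greedyTimes_lt_succ hω hab hc hk) (hmem (k + 2)).2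
  linarith [hω.1.2 a _ _ le_rfl (hmem k).1 (hmono (by omega : k ≤ k + 2)) (hmem (k + 2)).2]

end greedyTimes

noncomputable def runningSup (G : ℝ → ℝ) (t : ℝ) : ℝ := ⨆ r : Icc (0 : ℝ) t, G r

section runningSup

variable {G : ℝ → ℝ} {r s t : ℝ}

lemma le_runningSup (hG : BddAbove (G '' Icc 0 t)) (hr : r ∈ Icc 0 t) : G r ≤ runningSup G t :=
  le_ciSup (f := fun r : Icc (0 : ℝ) t ↦ G r) (by rwa [← image_eq_range]) ⟨r, hr⟩

lemma runningSup_le {B : ℝ} (ht : 0 ≤ t) (h : ∀ r ∈ Icc 0 t, G r ≤ B) : runningSup G t ≤ B :=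
  have : Nonempty (Icc (0 : ℝ) t) := ⟨⟨0, le_rfl, ht⟩⟩
  ciSup_le fun r ↦ h r r.2

lemma runningSup_mono (hG : BddAbove (G '' Icc 0 t)) (hs : 0 ≤ s) (hst : s ≤ t) :
    runningSup G s ≤ runningSup G t :=
  runningSup_le hs fun _ hr ↦ le_runningSup hG ⟨hr.1, hr.2.trans hst⟩

lemma runningSup_zero : runningSup G 0 = G 0 :=
  le_antisymm (runningSup_le le_rfl fun r hr ↦ by rw [le_antisymm hr.2 hr.1])
    (le_runningSup (by simp) ⟨le_rfl, le_rfl⟩)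

lemma runningSup_nonneg (hG : BddAbove (G '' Icc 0 t)) (hG0 : 0 ≤ G 0) (ht : 0 ≤ t) :
    0 ≤ runningSup G t :=
  hG0.trans (le_runningSup hG ⟨le_rfl, ht⟩)

end runningSup

theorem runningSup_le_of_step {T C p c L s t : ℝ} {G : ℝ → ℝ} {ω₁ ω₂ : ℝ → ℝ → ℝ}
    (hG : BddAbove (G '' Icc 0 t)) (hG0 : 0 ≤ G 0) (hC : 0 ≤ C) (hp : 0 < p) (hc : 0 < c)
    (hcL : c ≤ L) (hω₁ : IsRegularControl 0 T ω₁) (hω₂ : IsControl 0 T ω₂)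
    (hyp : ∀ s t, s ∈ Icc (0 : ℝ) T → t ∈ Icc (0 : ℝ) T → s < t → ω₁ s t ≤ L →
      G t - G s ≤ C * runningSup G t * ω₁ s t ^ p + ω₂ s t)
    (hs : 0 ≤ s) (hst : s ≤ t) (htT : t ≤ T) (hstep : ∀ u ∈ Ioo s t, ω₁ s u ≤ c) :
    runningSup G t ≤ runningSup G s + C * c ^ p * runningSup G t + ω₂ s t := by
  set B := runningSup G s + C * c ^ p * runningSup G t
  have hMt : 0 ≤ runningSup G t := runningSup_nonneg hG hG0 (hs.trans hst)
  have hbdd : ∀ {r}, r ≤ t → BddAbove (G '' Icc 0 r) := fun hr ↦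
    hG.mono (image_mono (Icc_subset_Icc_right hr))
  have hleft : ∀ r ∈ Icc 0 s, G r ≤ B := fun r hr ↦
    (le_runningSup (hbdd hst) hr).trans (le_add_of_nonneg_right (by positivity))
  have hinterior : ∀ r ∈ Ioo s t, G r ≤ B + ω₂ s r := by
    rintro r ⟨hsr, hrt⟩
    have hr0 : 0 ≤ r := hs.trans hsr.le
    have hω₁sr := hstep r ⟨hsr, hrt⟩
    have hinc := hyp s r ⟨hs, hst.trans htT⟩ ⟨hr0, hrt.le.trans htT⟩ hsr (hω₁sr.trans hcL)
    have hrough : C * runningSup G r * ω₁ s r ^ p ≤ C * c ^ p * runningSup G t := by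
      rw [mul_right_comm]
      have := hω₁.1.1 s r hs hsr.le (hrt.le.trans htT)
      gcongr
      · exact runningSup_nonneg (hbdd hrt.le) hG0 hr0
      · exact runningSup_mono hG hr0 hrt.le
    linarith [le_runningSup (hbdd hst) ⟨hs, le_rfl⟩]
  -- `ω₁ s t` itself may exceed `c`, so `t` is reached from the left, where `ω₁ r t → 0`
  have hright (hst' : s < t) : G t ≤ B + ω₂ s t := by
    have hω₁t := hω₁.tendsto_nhdsLT (hs.trans_lt hst') htT
    have hlim : Tendsto (fun r ↦ B + ω₂ s t + C * runningSup G t * ω₁ r t ^ p) (𝓝[<] t)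
        (𝓝 (B + ω₂ s t)) := by
      have := (((Real.continuousAt_rpow_const 0 p (Or.inr hp.le)).tendsto.comp hω₁t).const_mul
        (C * runningSup G t)).const_add (B + ω₂ s t)
      simpa [Real.zero_rpow hp.ne'] using this
    refine ge_of_tendsto hlim ?_
    filter_upwards [Ioo_mem_nhdsLT hst', hω₁t.eventually (gt_mem_nhds (hc.trans_le hcL))]
      with r hr hrL
    have hr0 : 0 ≤ r := hs.trans hr.1.le
    linarith [hyp r t ⟨hr0, hr.2.le.trans htT⟩ ⟨hs.trans hst, htT⟩ hr.2 hrL.le, hinterior r hr,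
      hω₂.2 s r t hs hr.1.le hr.2.le htT]
  refine runningSup_le (hs.trans hst) fun r hr ↦ ?_
  rcases le_or_gt r s with hrs | hsr
  · linarith [hleft r ⟨hr.1, hrs⟩, hω₂.1 s t hs hst htT]
  rcases hr.2.lt_or_eq with hrt | rfl
  · linarith [hinterior r ⟨hsr, hrt⟩, hω₂.mono_right hs hsr.le hrt.le htT]
  · exact hright hsr

theorem le_mul_of_two_step_growth {q r H : ℝ} {S W ρ : ℕ → ℝ} {N : ℕ} (hq : 1 ≤ q)
    (hqr : q ^ 2 < r) (hH : 0 ≤ H) (hS0 : 0 ≤ S 0) (hW0 : 0 ≤ W 0) (hW : Monotone W)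
    (hS : ∀ k, S (k + 1) ≤ q * (S k + (W (k + 1) - W k))) (hWH : ∀ k, W k ≤ H * ρ k)
    (hρ : ∀ k, 1 ≤ ρ k) (hρ2 : ∀ k, k + 2 ≤ N → r * ρ k ≤ ρ (k + 2)) :
    S N ≤ ρ N * (q * S 0 + q ^ 3 * (r - 1) / (r - q ^ 2) * H) := by
  have hgap : 0 < r - q ^ 2 := sub_pos.2 hqr
  have hq2 : 1 ≤ q ^ 2 := one_le_pow₀ hq
  have hq3 : q ^ 2 ≤ q ^ 3 := pow_le_pow_right₀ hq (by norm_num)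
  have hq3' : q ≤ q ^ 3 := le_self_pow₀ hq (by norm_num)
  set c := q ^ 3 * (q ^ 2 - 1) / (r - q ^ 2)
  -- `c` is chosen so that `q³ (q² - 1) + q² c = r c`, which makes the invariant below inductive
  have hc : c * (r - q ^ 2) = q ^ 3 * (q ^ 2 - 1) := div_mul_cancel₀ _ hgap.ne'
  have hc0 : 0 ≤ c := div_nonneg (mul_nonneg (by positivity) (by linarith)) hgap.le
  set D := q * S 0 + c * H
  have hcD : c * H ≤ D := le_add_of_nonneg_left (by positivity)
  have hSD : S 0 ≤ D := by nlinarith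
  have hD : 0 ≤ D := hS0.trans hSD
  have hinv : ∀ k ≤ N, S k ≤ q ^ 3 * W k + ρ k * D := by
    intro k
    induction k using Nat.twoStepInduction with
    | zero =>
      intro _
      nlinarith [hρ 0, hW0]
    | one =>
      intro _
      have hW1 : W 0 ≤ W 1 := hW (Nat.zero_le 1)
      nlinarith [hS 0, hρ 1, mul_le_mul_of_nonneg_right (hq.trans hq3') (hW0.trans hW1)]
    | more m ih _ =>
      intro hm
      have hWm : W m ≤ W (m + 1) := hW (Nat.le_succ m)
      have hWm1 : W (m + 1) ≤ W (m + 2) := hW (Nat.le_succ (m + 1))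
      have htwo : S (m + 2) ≤ q ^ 2 * (S m + (W (m + 2) - W m)) := by
        nlinarith [hS m, hS (m + 1)]
      calc S (m + 2) ≤ q ^ 2 * (q ^ 3 * W m + ρ m * D + (W (m + 2) - W m)) := by
            nlinarith [ih (by omega)]
        _ ≤ q ^ 3 * W (m + 2) + q ^ 3 * (q ^ 2 - 1) * W m + q ^ 2 * ρ m * D := by
            nlinarith
        _ ≤ q ^ 3 * W (m + 2) + ρ m * (c * (r - q ^ 2) * H + q ^ 2 * D) := by
            rw [hc]
            nlinarith [mul_le_mul_of_nonneg_left (hWH m) (by positivity : 0 ≤ q ^ 3 * (q ^ 2 - 1))]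
        _ ≤ q ^ 3 * W (m + 2) + ρ (m + 2) * D := by
            have : c * (r - q ^ 2) * H + q ^ 2 * D ≤ r * D := by nlinarith
            nlinarith [mul_le_mul_of_nonneg_left this (zero_le_one.trans (hρ m)),
              mul_le_mul_of_nonneg_right (hρ2 m hm) hD]
  calc S N ≤ q ^ 3 * W N + ρ N * D := hinv N le_rfl
    _ ≤ q ^ 3 * (H * ρ N) + ρ N * D := by gcongr; exact hWH N
    _ = ρ N * (q * S 0 + q ^ 3 * (r - 1) / (r - q ^ 2) * H) := by
      simp only [D, c]
      field_simp
      ring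

lemma le_inv_one_sub_mul_of_le_add_mul {K S w β b : ℝ} (hK : 0 ≤ K) (hβ : β ≤ b) (hb : b < 1)
    (h : K ≤ S + β * K + w) : K ≤ (1 - b)⁻¹ * (S + w) := by
  rw [le_inv_mul_iff₀ (sub_pos.2 hb)]
  nlinarith

lemma rpow_min_mul_le_inv {L M κ : ℝ} (hL : 0 < L) (hM : 0 < M) (hκ : 0 < κ) :
    (min 1 (1 / (L * M ^ κ)) * L) ^ (1 / κ) ≤ M⁻¹ := by
  have hle : min 1 (1 / (L * M ^ κ)) * L ≤ M⁻¹ ^ κ := by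
    calc min 1 (1 / (L * M ^ κ)) * L ≤ 1 / (L * M ^ κ) * L := by gcongr; exact min_le_right _ _
      _ = M⁻¹ ^ κ := by rw [Real.inv_rpow hM.le]; field_simp
  rw [one_div κ, Real.rpow_inv_le_iff_of_pos (by positivity) (inv_nonneg.2 hM.le) hκ]
  exact hle

lemma inv_one_sub_one_div_two_mul_exp_two_bounds :
    1 / (2 * Real.exp 2) < 1 ∧
      1 ≤ (1 - 1 / (2 * Real.exp 2))⁻¹ ∧ (1 - 1 / (2 * Real.exp 2))⁻¹ ≤ 11 / 10 := by
  have he : (2.7 : ℝ) < Real.exp 1 := lt_trans (by norm_num) Real.exp_one_gt_d9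
  have he2 : Real.exp 2 = Real.exp 1 * Real.exp 1 := by rw [← Real.exp_add]; norm_num
  have hx : 1 / (2 * Real.exp 2) ≤ 1 / 11 := by
    gcongr
    nlinarith
  have hx0 : 0 < 1 / (2 * Real.exp 2) := by positivity
  refine ⟨by linarith, one_le_inv₀ (by linarith) |>.2 (by linarith), ?_⟩
  rw [inv_le_comm₀ (by linarith) (by norm_num)]
  linarith

lemma sq_lt_exp_one_and_pow_three_mul_div_le_two {q : ℝ} (hq1 : 1 ≤ q) (hq : q ≤ 11 / 10) :
    q ^ 2 < Real.exp 1 ∧ q ^ 3 * (Real.exp 1 - 1) / (Real.exp 1 - q ^ 2) ≤ 2 := by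
  have he : (2.7 : ℝ) < Real.exp 1 := lt_trans (by norm_num) Real.exp_one_gt_d9
  have hq2 : q ^ 2 ≤ 121 / 100 := by nlinarith
  have hq3 : q ^ 3 ≤ 1331 / 1000 := by nlinarith
  refine ⟨by linarith, ?_⟩
  rw [div_le_iff₀ (by linarith)]
  nlinarith

lemma control_le_iSup_mul_exp {T a t : ℝ} {ω₁ ω₂ : ℝ → ℝ → ℝ} (hω₁ : IsControl 0 T ω₁)
    (hω₂ : IsControl 0 T ω₂) (ha : 0 ≤ a) (ht : t ∈ Icc 0 T) :
    ω₂ 0 t ≤ (⨆ u : Icc (0 : ℝ) T, ω₂ 0 u * Real.exp (-ω₁ 0 u / a)) * Real.exp (ω₁ 0 t / a) := by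
  have hbdd : BddAbove (range fun u : Icc (0 : ℝ) T ↦ ω₂ 0 u * Real.exp (-ω₁ 0 u / a)) := by
    refine ⟨ω₂ 0 T, forall_mem_range.2 fun u ↦ ?_⟩
    have hdecay : Real.exp (-ω₁ 0 u / a) ≤ 1 :=
      Real.exp_le_one_iff.2 (div_nonpos_of_nonpos_of_nonneg
        (neg_nonpos.2 (hω₁.1 0 u le_rfl u.2.1 u.2.2)) ha)
    calc ω₂ 0 u * Real.exp (-ω₁ 0 u / a) ≤ ω₂ 0 u * 1 :=
          mul_le_mul_of_nonneg_left hdecay (hω₂.1 0 u le_rfl u.2.1 u.2.2)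
      _ ≤ ω₂ 0 T := by rw [mul_one]; exact hω₂.mono_right le_rfl u.2.1 u.2.2 le_rfl
  calc ω₂ 0 t = ω₂ 0 t * Real.exp (-ω₁ 0 t / a) * Real.exp (ω₁ 0 t / a) := by
        rw [mul_assoc, ← Real.exp_add, neg_div, neg_add_cancel, Real.exp_zero, mul_one]
    _ ≤ _ := by gcongr; exact le_ciSup hbdd ⟨t, ht⟩

theorem runningSup_le_two_mul_exp {T C p a L : ℝ} {G : ℝ → ℝ} {ω₁ ω₂ : ℝ → ℝ → ℝ} (hT : 0 ≤ T)
    (hG : BddAbove (G '' Icc 0 T)) (hG0 : 0 ≤ G 0) (hC : 0 ≤ C) (hp : 0 < p) (ha : 0 < a)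
    (haL : a ≤ L) (hβ : C * a ^ p ≤ 1 / (2 * Real.exp 2))
    (hω₁ : IsRegularControl 0 T ω₁) (hω₂ : IsControl 0 T ω₂)
    (hyp : ∀ s t, s ∈ Icc (0 : ℝ) T → t ∈ Icc (0 : ℝ) T → s < t → ω₁ s t ≤ L →
      G t - G s ≤ C * runningSup G t * ω₁ s t ^ p + ω₂ s t) :
    runningSup G T ≤
      2 * Real.exp (ω₁ 0 T / a) * (G 0 + ⨆ t : Icc (0 : ℝ) T, ω₂ 0 t * Real.exp (-ω₁ 0 t / a)) := by
  set H := ⨆ t : Icc (0 : ℝ) T, ω₂ 0 t * Real.exp (-ω₁ 0 t / a)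
  have hH : 0 ≤ H := Real.iSup_nonneg fun t ↦
    mul_nonneg (hω₂.1 0 t le_rfl t.2.1 t.2.2) (Real.exp_pos _).le
  obtain ⟨hb, hq1, hq⟩ := inv_one_sub_one_div_two_mul_exp_two_bounds
  obtain ⟨hqe, hK⟩ := sq_lt_exp_one_and_pow_three_mul_div_le_two hq1 hq
  set τ := greedyTimes 0 T a ω₁
  obtain ⟨N, hNT, hN⟩ := exists_greedyTimes_eq hω₁ hT ha
  have hτ := greedyTimes_mem_Icc hω₁.1 hT ha.le
  have hτ_succ := greedyTimes_le_succ hω₁.1 hT ha.le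
  have hrec (k : ℕ) : runningSup G (τ (k + 1)) ≤
      (1 - 1 / (2 * Real.exp 2))⁻¹ * (runningSup G (τ k) + (ω₂ 0 (τ (k + 1)) - ω₂ 0 (τ k))) := by
    have hbdd := hG.mono (image_mono (Icc_subset_Icc_right (hτ (k + 1)).2))
    have hstep := runningSup_le_of_step hbdd hG0 hC hp ha haL hω₁ hω₂ hyp (hτ k).1 (hτ_succ k)
      (hτ (k + 1)).2 fun u hu ↦ control_greedyTimes_le hω₁.1 hT ha.le hu.1.le hu.2
    refine le_inv_one_sub_mul_of_le_add_mul (runningSup_nonneg hbdd hG0 (hτ (k + 1)).1) hβ hb ?_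
    linarith [hω₂.2 0 (τ k) (τ (k + 1)) le_rfl (hτ k).1 (hτ_succ k) (hτ (k + 1)).2]
  have hexp (k : ℕ) (hk : k + 2 ≤ N) :
      Real.exp 1 * Real.exp (ω₁ 0 (τ k) / a) ≤ Real.exp (ω₁ 0 (τ (k + 2)) / a) := by
    rw [← Real.exp_add, Real.exp_le_exp, le_div_iff₀ ha, add_mul, one_mul, div_mul_cancel₀ _ ha.ne']
    linarith [control_greedyTimes_add_two hω₁ hT ha (hN (k + 1) (by omega))]
  have hgrowth := le_mul_of_two_step_growth (S := fun k ↦ runningSup G (τ k))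
    (W := fun k ↦ ω₂ 0 (τ k)) (ρ := fun k ↦ Real.exp (ω₁ 0 (τ k) / a)) (N := N) hq1 hqe hH
    (by simpa [τ, greedyTimes, runningSup_zero] using hG0) (hω₂.1 0 _ le_rfl (hτ 0).1 (hτ 0).2)
    (fun k l hkl ↦ hω₂.mono_right le_rfl (hτ k).1 (greedyTimes_mono hω₁.1 hT ha.le hkl) (hτ l).2)
    hrec (fun k ↦ control_le_iSup_mul_exp hω₁.1 hω₂ ha.le (hτ k))
    (fun k ↦ Real.one_le_exp (div_nonneg (hω₁.1.1 0 _ le_rfl (hτ k).1 (hτ k).2) ha.le)) hexp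
  simp only [τ, hNT, greedyTimes, runningSup_zero] at hgrowth
  calc runningSup G T ≤ _ := hgrowth
    _ ≤ Real.exp (ω₁ 0 T / a) * (2 * G 0 + 2 * H) := by gcongr; linarith
    _ = _ := by ring

/-- **Rough Gronwall Lemma.** Fix a time horizon `T > 0` and let `G : [0,T] → [0,∞)` be a
path such that for some constants `C, L > 0`, `κ ≥ 1`, a regular control `ω₁` and a control
`ω₂` on `[0,T]`, one has
`G_t − G_s ≤ C (sup_{0 ≤ r ≤ t} G_r) ω₁(s,t)^{1/κ} + ω₂(s,t)`
for every `s < t` in `[0,T]` satisfying `ω₁(s,t) ≤ L`.  Then, with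
`α := min(1, 1/(L(2Ce²)^κ))`,
`sup_{0 ≤ t ≤ T} G_t ≤ 2 exp(ω₁(0,T)/(αL)) (G_0 + sup_{0 ≤ t ≤ T}(ω₂(0,t) exp(−ω₁(0,t)/(αL))))`. -/
theorem rough_gronwall_lemma
    (T : ℝ) (hT : 0 < T) (G : ℝ → ℝ)
    (hGnonneg : ∀ t ∈ Set.Icc (0 : ℝ) T, 0 ≤ G t)
    (C L κ : ℝ) (hC : 0 < C) (hL : 0 < L) (hκ : 1 ≤ κ)
    (ω₁ ω₂ : ℝ → ℝ → ℝ)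
    (hω₁ : IsRegularControl 0 T ω₁) (hω₂ : IsControl 0 T ω₂)
    (hyp : ∀ s t, s ∈ Set.Icc (0 : ℝ) T → t ∈ Set.Icc (0 : ℝ) T → s < t → ω₁ s t ≤ L →
      G t - G s ≤ C * (⨆ r : Set.Icc (0 : ℝ) t, G r) * (ω₁ s t) ^ (1 / κ) + ω₂ s t) :
    (⨆ t : Set.Icc (0 : ℝ) T, G t) ≤
      2 * Real.exp (ω₁ 0 T / (min 1 (1 / (L * (2 * C * Real.exp 2) ^ κ)) * L)) *
        (G 0 + ⨆ t : Set.Icc (0 : ℝ) T,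
          ω₂ 0 t * Real.exp (-(ω₁ 0 t) / (min 1 (1 / (L * (2 * C * Real.exp 2) ^ κ)) * L))) := by
  set a := min 1 (1 / (L * (2 * C * Real.exp 2) ^ κ)) * L
  have ha : 0 < a := by positivity
  have hG0 : 0 ≤ G 0 := hGnonneg 0 ⟨le_rfl, hT.le⟩
  by_cases hG : BddAbove (G '' Icc 0 T)
  · have hβ : C * a ^ (1 / κ) ≤ 1 / (2 * Real.exp 2) := by
      have := rpow_min_mul_le_inv (κ := κ) hL (by positivity : 0 < 2 * C * Real.exp 2)
        (by linarith)
      calc C * a ^ (1 / κ) ≤ C * (2 * C * Real.exp 2)⁻¹ := by gcongr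
        _ = 1 / (2 * Real.exp 2) := by field_simp
    exact runningSup_le_two_mul_exp hT.le hG hG0 hC.le (one_div_pos.2 (by linarith)) ha
      (mul_le_of_le_one_left hL.le (min_le_left _ _)) hβ hω₁ hω₂ hyp
  · -- an unbounded supremum is `0` in `ℝ`
    rw [Real.iSup_of_not_bddAbove (by rwa [← image_eq_range])]
    have := Real.iSup_nonneg fun t : Icc (0 : ℝ) T ↦
      mul_nonneg (hω₂.1 0 t le_rfl t.2.1 t.2.2) (Real.exp_pos (-(ω₁ 0 t) / a)).le
    positivity
end

section
/- Corollary of the Rough Gronwall Lemma (used for uniqueness arguments): Fix T > 0 and let G : [0,T] → [0,∞) be a path with G_0 = 0 such that for some constants C, L > 0, κ ≥ 1 and a regular control ω₁ on [0,T], one has δG_{st} := G_t − G_s ≤ C (sup_{0≤r≤t} G_r) ω₁(s,t)^{1/κ} for every pair s < t in [0,T] satisfying ω₁(s,t) ≤ L. Then G_t = 0 for all t ∈ [0,T]. -/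
/-! Pick `δ` so small that `ω₁(s,t) < min L (2C)^{-κ}` whenever `t - s < δ`. If `G` vanishes
on `[0,s]`, then on `(s, s + δ)` the hypothesis gives `G_r ≤ ½ sup_{[0,r]} G`, which forces the
running supremum, and hence `G`, to vanish up to `s + δ`. Steps of length `δ / 2` cover `[0,T]`. -/

open Set

theorem forall_mem_Icc_of_step {P : ℝ → Prop} {a b δ : ℝ} (hδ : 0 < δ) (ha : P a)
    (hstep : ∀ s t, a ≤ s → s ≤ t → t ≤ b → t - s < δ → P s → P t) :
    ∀ t ∈ Icc a b, P t := by
  have hn : ∀ n : ℕ, ∀ t ∈ Icc a b, t - a ≤ n * (δ / 2) → P t := by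
    intro n
    induction n with
    | zero =>
      intro t ht hta
      rwa [le_antisymm (by simpa using hta) ht.1]
    | succ n ih =>
      intro t ht hta
      push_cast at hta
      set s := max a (t - δ / 2)
      have hs : s ∈ Icc a b := ⟨le_max_left _ _, max_le (ht.1.trans ht.2) (by linarith [ht.2])⟩
      have hsa : s - a ≤ n * (δ / 2) :=
        sub_le_iff_le_add.2 (max_le (le_add_of_nonneg_left (by positivity)) (by linarith))
      exact hstep s t hs.1 (max_le ht.1 (by linarith)) ht.2
        (by linarith [le_max_right a (t - δ / 2)]) (ih s hs hsa)
  intro t ht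
  obtain ⟨n, hn'⟩ := exists_nat_ge ((t - a) / (δ / 2))
  exact hn n t ht ((div_le_iff₀ (by positivity)).1 hn')

theorem le_zero_of_le_mul_iSup_Icc {G : ℝ → ℝ} {a t c : ℝ} (hc₀ : 0 ≤ c) (hc₁ : c < 1)
    (h : ∀ r ∈ Icc a t, G r ≤ c * ⨆ u : Icc a r, G u) :
    ∀ r ∈ Icc a t, G r ≤ 0 := by
  intro r hr
  have hr' := h r hr
  by_cases hB : BddAbove (range fun u : Icc a r => G u)
  · have : Nonempty (Icc a r) := ⟨⟨a, left_mem_Icc.2 hr.1⟩⟩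
    have hM : (⨆ u : Icc a r, G u) ≤ c * ⨆ u : Icc a r, G u := by
      refine ciSup_le fun u => (h u ⟨u.2.1, u.2.2.trans hr.2⟩).trans ?_
      have : Nonempty (Icc a (u : ℝ)) := ⟨⟨a, left_mem_Icc.2 u.2.1⟩⟩
      exact mul_le_mul_of_nonneg_left
        (ciSup_le fun v => le_ciSup hB ⟨v, v.2.1, v.2.2.trans u.2.2⟩) hc₀
    have : (⨆ u : Icc a r, G u) ≤ 0 := by nlinarith
    exact (le_ciSup hB ⟨r, right_mem_Icc.2 hr.1⟩).trans this
  · -- unbounded above: `⨆` takes the junk value `0`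
    rwa [Real.iSup_of_not_bddAbove hB, mul_zero] at hr'

theorem eq_zero_on_Icc_of_le_half_iSup {G : ℝ → ℝ} {s t : ℝ}
    (hnonneg : ∀ r ∈ Icc 0 t, 0 ≤ G r) (hs : ∀ r ∈ Icc 0 s, G r = 0)
    (hloc : ∀ r ∈ Ioc s t, G r ≤ (1 / 2) * ⨆ u : Icc 0 r, G u) :
    ∀ r ∈ Icc 0 t, G r = 0 := by
  have hle : ∀ r ∈ Icc 0 t, G r ≤ 0 := by
    refine le_zero_of_le_mul_iSup_Icc (c := 1 / 2) (by norm_num) (by norm_num) fun r hr => ?_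
    rcases le_or_gt r s with hrs | hrs
    · rw [hs r ⟨hr.1, hrs⟩]
      exact mul_nonneg (by norm_num)
        (Real.iSup_nonneg fun u => hnonneg u ⟨u.2.1, u.2.2.trans hr.2⟩)
    · exact hloc r ⟨hrs, hr.2⟩
  exact fun r hr => le_antisymm (hle r hr) (hnonneg r hr)

theorem mul_rpow_one_div_le_half {C κ w : ℝ} (hC : 0 < C) (hκ : 0 < κ) (hw₀ : 0 ≤ w)
    (hw : w ≤ (2 * C)⁻¹ ^ κ) : C * w ^ (1 / κ) ≤ 1 / 2 := by
  have hroot : w ^ κ⁻¹ ≤ (2 * C)⁻¹ := (Real.rpow_inv_le_iff_of_pos hw₀ (by positivity) hκ).2 hw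
  calc C * w ^ (1 / κ) ≤ C * (2 * C)⁻¹ := by rw [one_div]; gcongr
    _ = 1 / 2 := by field_simp

theorem rough_gronwall_corollary_general
    (T : ℝ) (G : ℝ → ℝ)
    (hGnonneg : ∀ t ∈ Set.Icc (0 : ℝ) T, 0 ≤ G t)
    (hG0 : G 0 = 0)
    (C L κ : ℝ) (hC : 0 < C) (hL : 0 < L) (hκ : 1 ≤ κ)
    (ω₁ : ℝ → ℝ → ℝ)
    (hω₁ : IsRegularControl 0 T ω₁)
    (hyp : ∀ s t, s ∈ Set.Icc (0 : ℝ) T → t ∈ Set.Icc (0 : ℝ) T → s < t → ω₁ s t ≤ L →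
      G t - G s ≤ C * (⨆ r : Set.Icc (0 : ℝ) t, G r) * (ω₁ s t) ^ (1 / κ)) :
    ∀ t ∈ Set.Icc (0 : ℝ) T, G t = 0 := by
  obtain ⟨⟨hω_nonneg, -⟩, hreg⟩ := hω₁
  have hκ₀ : 0 < κ := by linarith
  obtain ⟨δ, hδ, hsmall⟩ := hreg (min L ((2 * C)⁻¹ ^ κ)) (lt_min hL (by positivity))
  have hvanish : ∀ t ∈ Icc 0 T, ∀ r ∈ Icc 0 t, G r = 0 := by
    refine forall_mem_Icc_of_step hδ (fun r hr => by rw [le_antisymm hr.2 hr.1, hG0]) ?_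
    intro s t hs hst htT hts hvan
    refine eq_zero_on_Icc_of_le_half_iSup (fun r hr => hGnonneg r ⟨hr.1, hr.2.trans htT⟩) hvan ?_
    intro r hr
    have hr₀ : 0 ≤ r := hs.trans hr.1.le
    have hω := hsmall s r hs hr.1.le (hr.2.trans htT) (by linarith [hr.2])
    have hωpow : C * ω₁ s r ^ (1 / κ) ≤ 1 / 2 := mul_rpow_one_div_le_half hC hκ₀
      (hω_nonneg s r hs hr.1.le (hr.2.trans htT)) (hω.le.trans (min_le_right _ _))
    have hM : 0 ≤ ⨆ u : Icc 0 r, G u :=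
      Real.iSup_nonneg fun u => hGnonneg u ⟨u.2.1, u.2.2.trans (hr.2.trans htT)⟩
    have := hyp s r ⟨hs, hst.trans htT⟩ ⟨hr₀, hr.2.trans htT⟩ hr.1 (hω.le.trans (min_le_left _ _))
    rw [hvan s ⟨hs, le_rfl⟩] at this
    nlinarith
  exact fun t ht => hvanish t ht t ⟨ht.1, le_rfl⟩

/-- **Corollary of the Rough Gronwall Lemma** (used for uniqueness arguments).
Fix `T > 0` and let `G : [0,T] → [0,∞)` be a path with `G_0 = 0` such that for some
constants `C, L > 0`, `κ ≥ 1` and a regular control `ω₁` on `[0,T]`, one has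
`G_t − G_s ≤ C (sup_{0 ≤ r ≤ t} G_r) ω₁(s,t)^{1/κ}`
for every pair `s < t` in `[0,T]` satisfying `ω₁(s,t) ≤ L`. Then `G_t = 0` for all
`t ∈ [0,T]`. -/
theorem rough_gronwall_corollary
    (T : ℝ) (hT : 0 < T) (G : ℝ → ℝ)
    (hGnonneg : ∀ t ∈ Set.Icc (0 : ℝ) T, 0 ≤ G t)
    (hG0 : G 0 = 0)
    (C L κ : ℝ) (hC : 0 < C) (hL : 0 < L) (hκ : 1 ≤ κ)
    (ω₁ : ℝ → ℝ → ℝ)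
    (hω₁ : IsRegularControl 0 T ω₁)
    (hyp : ∀ s t, s ∈ Set.Icc (0 : ℝ) T → t ∈ Set.Icc (0 : ℝ) T → s < t → ω₁ s t ≤ L →
      G t - G s ≤ C * (⨆ r : Set.Icc (0 : ℝ) t, G r) * (ω₁ s t) ^ (1 / κ)) :
    ∀ t ∈ Set.Icc (0 : ℝ) T, G t = 0 :=
  rough_gronwall_corollary_general T G hGnonneg hG0 C L κ hC hL hκ ω₁ hω₁ hyp
end

section
/- Continuity lemma concluding the uniqueness argument: Let T > 0, let y, z : [0,T] → ℝ be continuous with y_0 = z_0, let m be a finite Borel measure on [0,T], and let C ≥ 0. Assume that for all 0 ≤ s ≤ t ≤ T: sup_{r ∈ [s,t]} |y_r − z_r| ≤ C ( |y_s − z_s| + m({u ∈ (s,t) : y_u = z_u}) ). Then y_t = z_t for all t ∈ [0,T]. -/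
open MeasureTheory

/-- **Continuity lemma concluding the uniqueness argument.** Let `T > 0`, let
`y, z : [0,T] → ℝ` be continuous with `y₀ = z₀`, let `m` be a finite Borel measure on
`[0,T]`, and let `C ≥ 0`. If for all `0 ≤ s ≤ t ≤ T`,
`sup_{r ∈ [s,t]} |y_r − z_r| ≤ C (|y_s − z_s| + m({u ∈ (s,t) : y_u = z_u}))`,
then `y_t = z_t` for all `t ∈ [0,T]`. -/
theorem continuity_lemma_uniqueness
    (T : ℝ) (hT : 0 < T) (y z : ℝ → ℝ)
    (hy : ContinuousOn y (Set.Icc 0 T)) (hz : ContinuousOn z (Set.Icc 0 T))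
    (h0 : y 0 = z 0)
    (m : Measure ℝ) [IsFiniteMeasure m]
    (C : ℝ) (hC : 0 ≤ C)
    (hyp : ∀ s t : ℝ, 0 ≤ s → s ≤ t → t ≤ T →
      (⨆ r : Set.Icc s t, |y r - z r|)
        ≤ C * (|y s - z s| + (m {u | u ∈ Set.Ioo s t ∧ y u = z u}).toReal)) :
    ∀ t ∈ Set.Icc (0 : ℝ) T, y t = z t := by
  intro t ht
  obtain ⟨ht0, htT⟩ := ht
  -- The set of agreement times in [0, t]
  set S : Set ℝ := Set.Icc 0 t ∩ (fun u => y u - z u) ⁻¹' {0} with hSdef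
  have hsubT : Set.Icc (0:ℝ) t ⊆ Set.Icc 0 T := Set.Icc_subset_Icc le_rfl htT
  have hfc : ContinuousOn (fun u => y u - z u) (Set.Icc (0:ℝ) t) :=
    (hy.mono hsubT).sub (hz.mono hsubT)
  have hSclosed : IsClosed S := by
    apply ContinuousOn.preimage_isClosed_of_isClosed hfc isClosed_Icc isClosed_singleton
  have hSne : S.Nonempty := ⟨0, ⟨le_rfl, ht0⟩, by simp [h0]⟩
  have hSbdd : BddAbove S := ⟨t, fun u hu => hu.1.2⟩
  set s := sSup S with hs
  have hsmem : s ∈ S := hSclosed.csSup_mem hSne hSbdd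
  have hs0 : 0 ≤ s := hsmem.1.1
  have hst : s ≤ t := hsmem.1.2
  have hsyz : y s = z s := by have := hsmem.2; simpa [sub_eq_zero] using this
  rcases eq_or_lt_of_le hst with heq | hlt
  · rw [← heq]; exact hsyz
  · -- no agreement points in (s, t)
    have hempty : {u | u ∈ Set.Ioo s t ∧ y u = z u} = ∅ := by
      ext u
      simp only [Set.mem_setOf_eq, Set.mem_empty_iff_false, iff_false, not_and]
      intro hu hyz
      have huS : u ∈ S := ⟨⟨le_trans hs0 hu.1.le, hu.2.le⟩, by simp [sub_eq_zero, hyz]⟩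
      exact absurd (le_csSup hSbdd huS) (not_le.mpr hu.1)
    have hkey := hyp s t hs0 hst htT
    rw [hempty] at hkey
    simp only [measure_empty, ENNReal.toReal_zero, hsyz, sub_self, abs_zero, add_zero,
      mul_zero] at hkey
    -- bound |y t - z t| by the sup
    have hbdd : BddAbove (Set.range fun r : Set.Icc s t => |y r - z r|) := by
      have hsub2 : Set.Icc s t ⊆ Set.Icc 0 T := Set.Icc_subset_Icc hs0 htT
      have himg : BddAbove ((fun u => |y u - z u|) '' Set.Icc s t) :=
        IsCompact.bddAbove_image isCompact_Icc ((hy.mono hsub2).sub (hz.mono hsub2)).abs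
      rw [Set.image_eq_range] at himg
      exact himg
    have hle : |y t - z t| ≤ ⨆ r : Set.Icc s t, |y r - z r| :=
      le_ciSup hbdd (⟨t, hst, le_rfl⟩ : Set.Icc s t)
    have : |y t - z t| ≤ 0 := hle.trans hkey
    have : |y t - z t| = 0 := le_antisymm this (abs_nonneg _)
    rwa [abs_eq_zero, sub_eq_zero] at this
end
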